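/- For odd N and ε ∈ (0,1/2), the majority-vote error of N+2 independent classifiers is strictly less than that of N classifiers: P(N+2,ε) < P(N,ε), i.e., the binomial-tail majority error is monotonically decreasing in the (odd) ensemble size. -/

import Mathlib

/-!
Passing from `2t + 1` to `2t + 3` voters, Pascal's rule `C(n+1, k+1) = C(n, k) + C(n, k+1)`
splits off one voter at a time; the only outcomes whose verdict changes are those in which the
first `2t + 1` voters are one vote away from a tie. This gives
`P(2t+3, ε) = P(2t+1, ε) - C(2t+1, t) (ε (1-ε))^(t+1) (1 - 2ε)`,
and the correction is positive exactly when `ε < 1/2`.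
-/

/-- The majority-vote error of `N` independent classifiers each erring with probability `ε`. -/
noncomputable def majErr (N : ℕ) (ε : ℝ) : ℝ :=
  ∑ k ∈ Finset.Icc ((N + 1) / 2) N, (N.choose k : ℝ) * ε ^ k * (1 - ε) ^ (N - k)

open Finset

section BinomialTail

variable {R : Type*} [CommRing R]

def binomTerm (n k : ℕ) (p : R) : R :=
  n.choose k * p ^ k * (1 - p) ^ (n - k)

def binomTail (n m : ℕ) (p : R) : R :=
  ∑ k ∈ Icc m n, binomTerm n k p

theorem binomTerm_eq_zero_of_lt {n k : ℕ} (h : n < k) (p : R) : binomTerm n k p = 0 := by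
  simp [binomTerm, Nat.choose_eq_zero_of_lt h]

theorem binomTerm_succ_succ (n k : ℕ) (p : R) :
    binomTerm (n + 1) (k + 1) p = p * binomTerm n k p + (1 - p) * binomTerm n (k + 1) p := by
  rcases lt_or_ge k n with hk | hk
  · simp only [binomTerm, Nat.choose_succ_succ', Nat.add_sub_add_right,
      show n - k = n - (k + 1) + 1 by omega]
    push_cast
    ring
  · rw [binomTerm_eq_zero_of_lt (Nat.lt_succ_of_le hk)]
    simp only [binomTerm, Nat.choose_succ_succ', Nat.add_sub_add_right,
      Nat.choose_eq_zero_of_lt (Nat.lt_succ_of_le hk)]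
    push_cast
    ring

theorem binomTail_eq_binomTerm_add {n m : ℕ} (h : m ≤ n) (p : R) :
    binomTail n m p = binomTerm n m p + binomTail n (m + 1) p := by
  rw [binomTail, binomTail, Icc_add_one_left_eq_Ioc]
  exact (add_sum_Ioc_eq_sum_Icc h).symm

theorem binomTail_succ_succ {n m : ℕ} (h : m ≤ n) (p : R) :
    binomTail (n + 1) (m + 1) p = binomTail n (m + 1) p + p * binomTerm n m p := by
  have hshift : binomTail (n + 1) (m + 1) p = ∑ k ∈ Icc m n, binomTerm (n + 1) (k + 1) p := by
    rw [binomTail, ← map_add_right_Icc, sum_map]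
    rfl
  have hup : ∑ k ∈ Icc m n, binomTerm n (k + 1) p = binomTail n (m + 1) p :=
    calc ∑ k ∈ Icc m n, binomTerm n (k + 1) p
        = ∑ j ∈ Icc (m + 1) (n + 1), binomTerm n j p := by
          rw [← map_add_right_Icc, sum_map]
          rfl
      _ = binomTail n (m + 1) p := by
          rw [sum_Icc_succ_top (by omega), binomTerm_eq_zero_of_lt n.lt_succ_self, add_zero]
          rfl
  rw [hshift]
  simp only [binomTerm_succ_succ, sum_add_distrib, ← mul_sum, hup]
  rw [← binomTail, binomTail_eq_binomTerm_add h]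
  ring

theorem binomTail_two_mul_add_three (t : ℕ) (p : R) :
    binomTail (2 * t + 3) (t + 2) p =
      binomTail (2 * t + 1) (t + 1) p -
        (2 * t + 1).choose t * (p * (1 - p)) ^ (t + 1) * (1 - 2 * p) := by
  have hpascal : (2 * t + 2).choose (t + 1) = 2 * (2 * t + 1).choose t := by
    rw [Nat.choose_succ_succ', Nat.choose_symm_half]
    ring
  rw [binomTail_succ_succ (n := 2 * t + 2) (by omega),
    binomTail_succ_succ (n := 2 * t + 1) (by omega),
    binomTail_eq_binomTerm_add (n := 2 * t + 1) (m := t + 1) (by omega)]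
  simp only [binomTerm, hpascal, Nat.choose_symm_half, mul_pow,
    show 2 * t + 2 - (t + 1) = t + 1 by omega, show 2 * t + 1 - (t + 1) = t by omega]
  push_cast
  ring

end BinomialTail

theorem majErr_eq_binomTail (N : ℕ) (ε : ℝ) : majErr N ε = binomTail N ((N + 1) / 2) ε := rfl

/-- For odd `N` and `ε ∈ (0, 1/2)`, the majority-vote error of `N + 2` independent
classifiers is strictly less than that of `N` classifiers. -/
theorem majErr_strict_anti (N : ℕ) (hN : Odd N)
    (ε : ℝ) (hε0 : 0 < ε) (hε : ε < 1 / 2) :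
    majErr (N + 2) ε < majErr N ε := by
  obtain ⟨t, rfl⟩ := hN
  rw [majErr_eq_binomTail, majErr_eq_binomTail, show 2 * t + 1 + 2 = 2 * t + 3 by ring,
    show (2 * t + 3 + 1) / 2 = t + 2 by omega, show (2 * t + 1 + 1) / 2 = t + 1 by omega,
    binomTail_two_mul_add_three]
  have hchoose : (0 : ℝ) < (2 * t + 1).choose t := mod_cast Nat.choose_pos (by omega)
  have hvar : 0 < ε * (1 - ε) := mul_pos hε0 (by linarith)
  exact sub_lt_self _ (mul_pos (mul_pos hchoose (pow_pos hvar _)) (by linarith))
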